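/- arXiv:0902.3490 — 4 statements merged into one kernel-verified Lean document; each statement's English description precedes it below -/
import Mathlib

section
/- For α ∈ ℂ, the function K_α(x) = (α + x/|x|² - iα x/|x|)·θ_α(x), with θ_α(x) = -e^{iα|x|}/(4π|x|), satisfies (D + α)K_α = 0 pointwise on ℝ³ \ {0}. -/
noncomputable section

/-- ℝ³ -/
abbrev V3 := Fin 3 → ℝ
/-- Complex quaternions ℍ(ℂ) -/
abbrev HC := Quaternion ℂ

/-- partial derivative ∂ₖ of a function on ℝ³ -/
noncomputable def pd {E : Type*} [NormedAddCommGroup E] [NormedSpace ℝ E]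
    (k : Fin 3) (g : V3 → E) (x : V3) : E :=
  fderiv ℝ g x (Pi.single k 1)

noncomputable def grad {E : Type*} [NormedAddCommGroup E] [NormedSpace ℝ E]
    (g : V3 → E) (x : V3) : Fin 3 → E := fun k => pd k g x

noncomputable def dvg {E : Type*} [NormedAddCommGroup E] [NormedSpace ℝ E]
    (F : V3 → Fin 3 → E) (x : V3) : E :=
  pd 0 (fun y => F y 0) x + pd 1 (fun y => F y 1) x + pd 2 (fun y => F y 2) x

noncomputable def rot {E : Type*} [NormedAddCommGroup E] [NormedSpace ℝ E]
    (F : V3 → Fin 3 → E) (x : V3) : Fin 3 → E :=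
  ![pd 1 (fun y => F y 2) x - pd 2 (fun y => F y 1) x,
    pd 2 (fun y => F y 0) x - pd 0 (fun y => F y 2) x,
    pd 0 (fun y => F y 1) x - pd 1 (fun y => F y 0) x]

/-- scalar Laplacian -/
noncomputable def lapS {E : Type*} [NormedAddCommGroup E] [NormedSpace ℝ E]
    (g : V3 → E) (x : V3) : E :=
  pd 0 (pd 0 g) x + pd 1 (pd 1 g) x + pd 2 (pd 2 g) x

/-- purely vectorial quaternion from a ℂ³ vector -/
def vecq (v : Fin 3 → ℂ) : HC := ⟨0, v 0, v 1, v 2⟩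
/-- scalar quaternion -/
def scq (a : ℂ) : HC := ⟨a, 0, 0, 0⟩

def e1 : HC := ⟨0,1,0,0⟩
def e2 : HC := ⟨0,0,1,0⟩
def e3 : HC := ⟨0,0,0,1⟩

/-- vector part of a quaternion, as a ℂ³ vector -/
def vecPart (a : HC) : Fin 3 → ℂ := ![a.imI, a.imJ, a.imK]

/-- quaternionic conjugation C_H -/
def qconj (a : HC) : HC := ⟨a.re, -a.imI, -a.imJ, -a.imK⟩

/-- componentwise partial derivative of an ℍ(ℂ)-valued function -/
noncomputable def qpd (k : Fin 3) (F : V3 → HC) (x : V3) : HC :=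
  ⟨pd k (fun y => (F y).re) x, pd k (fun y => (F y).imI) x,
   pd k (fun y => (F y).imJ) x, pd k (fun y => (F y).imK) x⟩

/-- The Moisil–Teodorescu (Dirac) operator D = Σₖ iₖ∂ₖ -/
noncomputable def Dq (F : V3 → HC) (x : V3) : HC :=
  e1 * qpd 0 F x + e2 * qpd 1 F x + e3 * qpd 2 F x

/-- componentwise Laplacian of an ℍ(ℂ)-valued function -/
noncomputable def qlap (F : V3 → HC) (x : V3) : HC :=
  qpd 0 (qpd 0 F) x + qpd 1 (qpd 1 F) x + qpd 2 (qpd 2 F) x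

/-- ContDiffOn for ℍ(ℂ)-valued functions, componentwise -/
def QContDiffOn (n : ℕ∞) (F : V3 → HC) (s : Set V3) : Prop :=
  ContDiffOn ℝ n (fun x => (F x).re) s ∧ ContDiffOn ℝ n (fun x => (F x).imI) s ∧
  ContDiffOn ℝ n (fun x => (F x).imJ) s ∧ ContDiffOn ℝ n (fun x => (F x).imK) s

/-- euclidean norm on ℝ³ -/
noncomputable def nrm (x : V3) : ℝ := Real.sqrt (x 0 ^ 2 + x 1 ^ 2 + x 2 ^ 2)

/-- fundamental solution of the Helmholtz operator -/
noncomputable def theta (α : ℂ) (x : V3) : ℂ :=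
  -Complex.exp (Complex.I * α * (nrm x : ℂ)) / (4 * Real.pi * (nrm x : ℂ))

/-- x as a purely vectorial quaternion -/
def xq (x : V3) : HC := vecq fun k => ((x k : ℝ) : ℂ)


/-- The explicit fundamental solution K_α. -/
noncomputable def Kfun (α : ℂ) (y : V3) : HC :=
  (α • (1 : HC) + (((nrm y : ℂ)) ^ 2)⁻¹ • xq y
    - (Complex.I * α * ((nrm y : ℂ))⁻¹) • xq y) * scq (theta α y)

/-! `K_α` is the radial field `f(r) + g(r) y` with `f = α θ` and `g = (r⁻² - iα r⁻¹) θ`. For any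
radial field, `Σ iₖ iₖ = -3` and `y² = -r²` give `D(f + g y) = (f'/r) y - (3g + r g')`, so
`(D + α)K_α = 0` reduces to the radial ODEs `f' = -α r g` and `r g' = α f - 3g`; both follow from
`θ' = (iα - r⁻¹) θ`. -/

open Complex Quaternion

-- Simp's quaternion lemmas do not fire on anonymous-constructor literals, so `scq` and `xq`
-- stay folded and are read off componentwise.
section Components

variable (a : ℂ) (x : V3)

@[simp] lemma scq_re : (scq a).re = a := rfl
@[simp] lemma scq_imI : (scq a).imI = 0 := rfl
@[simp] lemma scq_imJ : (scq a).imJ = 0 := rfl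
@[simp] lemma scq_imK : (scq a).imK = 0 := rfl
@[simp] lemma xq_re : (xq x).re = 0 := rfl
@[simp] lemma xq_imI : (xq x).imI = x 0 := rfl
@[simp] lemma xq_imJ : (xq x).imJ = x 1 := rfl
@[simp] lemma xq_imK : (xq x).imK = x 2 := rfl

end Components

lemma nrm_sq (x : V3) : nrm x ^ 2 = x 0 ^ 2 + x 1 ^ 2 + x 2 ^ 2 :=
  Real.sq_sqrt (by positivity)

lemma nrm_pos {x : V3} (hx : x ≠ 0) : 0 < nrm x := by
  refine Real.sqrt_pos.2 ?_
  obtain ⟨k, hk⟩ := Function.ne_iff.1 hx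
  fin_cases k <;> simp only [Pi.zero_apply] at hk <;> positivity

lemma hasFDerivAt_nrm {x : V3} (hx : x ≠ 0) :
    HasFDerivAt nrm ((nrm x)⁻¹ • ∑ k, x k • ContinuousLinearMap.proj (R := ℝ) k) x := by
  have hproj (k : Fin 3) : HasFDerivAt (fun y : V3 => y k) (ContinuousLinearMap.proj k) x :=
    hasFDerivAt_apply (𝕜 := ℝ) k x
  have hsq : HasFDerivAt (fun y : V3 => y 0 ^ 2 + y 1 ^ 2 + y 2 ^ 2) _ x :=
    (((hproj 0).pow 2).add ((hproj 1).pow 2)).add ((hproj 2).pow 2)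
  refine (hsq.sqrt (nrm_sq x ▸ (pow_pos (nrm_pos hx) 2).ne')).congr_fderiv ?_
  have hr : nrm x ≠ 0 := (nrm_pos hx).ne'
  ext v
  simp only [add_apply, smul_apply, ContinuousLinearMap.proj_apply, Fin.sum_univ_three,
    smul_eq_mul]
  rw [← nrm]
  field_simp
  ring

lemma pd_comp_nrm {E : Type*} [NormedAddCommGroup E] [NormedSpace ℝ E] {φ : ℝ → E} {φ' : E}
    {x : V3} (hx : x ≠ 0) (hφ : HasDerivAt φ φ' (nrm x)) (k : Fin 3) :
    pd k (fun y => φ (nrm y)) x = (x k / nrm x) • φ' := by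
  have h : HasFDerivAt (fun y => φ (nrm y)) _ x := hφ.hasFDerivAt.comp x (hasFDerivAt_nrm hx)
  rw [pd, h.fderiv]
  simp [Pi.single_apply, div_eq_inv_mul, mul_smul]

lemma pd_ofReal_mul_comp_nrm {φ : ℝ → ℂ} {φ' : ℂ} {x : V3} (hx : x ≠ 0)
    (hφ : HasDerivAt φ φ' (nrm x)) (j k : Fin 3) :
    pd k (fun y => (y j : ℂ) * φ (nrm y)) x
      = (if j = k then φ (nrm x) else 0) + x j * (x k / nrm x * φ') := by
  have hcoord : HasFDerivAt (fun y : V3 => (y j : ℂ)) _ x :=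
    ofRealCLM.hasFDerivAt.comp x (hasFDerivAt_apply (𝕜 := ℝ) j x)
  have hrad : HasFDerivAt (fun y => φ (nrm y)) _ x :=
    hφ.hasFDerivAt.comp x (hasFDerivAt_nrm hx)
  have h : HasFDerivAt (fun y => (y j : ℂ) * φ (nrm y)) _ x := hcoord.mul hrad
  rw [pd, h.fderiv]
  simp only [add_apply, smul_apply, ContinuousLinearMap.comp_apply,
    ContinuousLinearMap.toSpanSingleton_apply, ContinuousLinearMap.proj_apply, sum_apply,
    ofRealCLM_apply, Pi.single_apply, smul_eq_mul, real_smul, mul_ite, mul_one, mul_zero,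
    Finset.sum_ite_eq', Finset.mem_univ, if_true]
  split_ifs <;> push_cast <;> ring

def radialField (f g : ℝ → ℂ) (y : V3) : HC := scq (f (nrm y)) + g (nrm y) • xq y

lemma qpd_radialField {f g : ℝ → ℂ} {f' g' : ℂ} {x : V3} (hx : x ≠ 0)
    (hf : HasDerivAt f f' (nrm x)) (hg : HasDerivAt g g' (nrm x)) (k : Fin 3) :
    qpd k (radialField f g) x =
      ⟨x k / nrm x * f',
        (if 0 = k then g (nrm x) else 0) + x 0 * (x k / nrm x * g'),
        (if 1 = k then g (nrm x) else 0) + x 1 * (x k / nrm x * g'),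
        (if 2 = k then g (nrm x) else 0) + x 2 * (x k / nrm x * g')⟩ := by
  have hre : (fun y => (radialField f g y).re) = fun y => f (nrm y) := by
    ext y; simp [radialField]
  have himI : (fun y => (radialField f g y).imI) = fun y => (y 0 : ℂ) * g (nrm y) := by
    ext y; simp [radialField, mul_comm]
  have himJ : (fun y => (radialField f g y).imJ) = fun y => (y 1 : ℂ) * g (nrm y) := by
    ext y; simp [radialField, mul_comm]
  have himK : (fun y => (radialField f g y).imK) = fun y => (y 2 : ℂ) * g (nrm y) := by
    ext y; simp [radialField, mul_comm]
  rw [qpd, hre, himI, himJ, himK, pd_comp_nrm hx hf, pd_ofReal_mul_comp_nrm hx hg,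
    pd_ofReal_mul_comp_nrm hx hg, pd_ofReal_mul_comp_nrm hx hg, Complex.real_smul]
  push_cast
  rfl

lemma Dq_radialField {f g : ℝ → ℂ} {f' g' : ℂ} {x : V3} (hx : x ≠ 0)
    (hf : HasDerivAt f f' (nrm x)) (hg : HasDerivAt g g' (nrm x)) :
    Dq (radialField f g) x = (f' / nrm x) • xq x - scq (3 * g (nrm x) + nrm x * g') := by
  have hsum : (x 0 : ℂ) ^ 2 + (x 1 : ℂ) ^ 2 + (x 2 : ℂ) ^ 2 = (nrm x : ℂ) ^ 2 := by
    exact_mod_cast (nrm_sq x).symm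
  have hr : (nrm x : ℂ) ≠ 0 := ofReal_ne_zero.2 (nrm_pos hx).ne'
  rw [Quaternion.ext_iff]
  -- expand the products before `e₁, e₂, e₃` and `qpd` unfold to literals
  refine ⟨?_, ?_, ?_, ?_⟩ <;>
    simp only [Dq, re_add, imI_add, imJ_add, imK_add, re_mul, imI_mul, imJ_mul, imK_mul] <;>
    simp [qpd_radialField hx hf hg, e1, e2, e3] <;> field_simp
  · linear_combination -g' * hsum
  all_goals ring

lemma Dq_radialField_add_smul_eq_zero {α : ℂ} {f g : ℝ → ℂ} {x : V3} (hx : x ≠ 0)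
    (hf : HasDerivAt f (-(α * nrm x) * g (nrm x)) (nrm x))
    (hg : HasDerivAt g ((α * f (nrm x) - 3 * g (nrm x)) / nrm x) (nrm x)) :
    Dq (radialField f g) x + α • radialField f g x = 0 := by
  have hr : (nrm x : ℂ) ≠ 0 := ofReal_ne_zero.2 (nrm_pos hx).ne'
  rw [Dq_radialField hx hf hg, radialField, Quaternion.ext_iff]
  refine ⟨?_, ?_, ?_, ?_⟩ <;> simp <;> field_simp <;> ring

def thetaRadial (α : ℂ) (r : ℝ) : ℂ := -exp (I * α * r) / (4 * Real.pi * r)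

def kScalar (α : ℂ) (r : ℝ) : ℂ := α * thetaRadial α r

def kVector (α : ℂ) (r : ℝ) : ℂ := (((r : ℂ) ^ 2)⁻¹ - I * α * (r : ℂ)⁻¹) * thetaRadial α r

lemma Kfun_eq_radialField (α : ℂ) : Kfun α = radialField (kScalar α) (kVector α) := by
  funext y
  rw [Quaternion.ext_iff]
  refine ⟨?_, ?_, ?_, ?_⟩ <;>
    simp [Kfun, radialField, theta, kScalar, kVector, thetaRadial] <;> ring

lemma hasDerivAt_thetaRadial (α : ℂ) {r : ℝ} (hr : r ≠ 0) :
    HasDerivAt (thetaRadial α) ((I * α - (r : ℂ)⁻¹) * thetaRadial α r) r := by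
  have hrc : (r : ℂ) ≠ 0 := ofReal_ne_zero.2 hr
  have hid : HasDerivAt (fun s : ℝ => (s : ℂ)) 1 r := ofRealCLM.hasDerivAt
  have hexp : HasDerivAt (fun s : ℝ => exp (I * α * s)) (exp (I * α * r) * (I * α * 1)) r :=
    (hid.const_mul (I * α)).cexp
  have hden : HasDerivAt (fun s : ℝ => 4 * (Real.pi : ℂ) * s) (4 * Real.pi * 1) r :=
    hid.const_mul _
  have hπ : (Real.pi : ℂ) ≠ 0 := ofReal_ne_zero.2 Real.pi_ne_zero
  refine (hexp.neg.div hden (by simp [hrc, hπ])).congr_deriv ?_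
  simp only [thetaRadial, Pi.neg_apply]
  field_simp
  ring

lemma hasDerivAt_kScalar (α : ℂ) {r : ℝ} (hr : r ≠ 0) :
    HasDerivAt (kScalar α) (-(α * r) * kVector α r) r := by
  have hrc : (r : ℂ) ≠ 0 := ofReal_ne_zero.2 hr
  refine ((hasDerivAt_thetaRadial α hr).const_mul α).congr_deriv ?_
  simp only [kVector]
  field_simp
  ring

lemma hasDerivAt_kVector (α : ℂ) {r : ℝ} (hr : r ≠ 0) :
    HasDerivAt (kVector α) ((α * kScalar α r - 3 * kVector α r) / r) r := by
  have hrc : (r : ℂ) ≠ 0 := ofReal_ne_zero.2 hr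
  have hid : HasDerivAt (fun s : ℝ => (s : ℂ)) 1 r := ofRealCLM.hasDerivAt
  have hcoef : HasDerivAt (fun s : ℝ => ((s : ℂ) ^ 2)⁻¹ - I * α * (s : ℂ)⁻¹) _ r :=
    ((hid.pow 2).inv (pow_ne_zero 2 hrc)).sub ((hid.inv hrc).const_mul (I * α))
  refine (hcoef.mul (hasDerivAt_thetaRadial α hr)).congr_deriv ?_
  simp only [kScalar, kVector, Pi.pow_apply]
  field_simp
  linear_combination -(thetaRadial α r * r ^ 3 * α ^ 2) * I_sq

/-- (D + α)K_α = 0 on ℝ³ \ {0}. -/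
theorem stmt3 (α : ℂ) (x : V3) (hx : x ≠ 0) :
    Dq (Kfun α) x + α • Kfun α x = 0 := by
  have hr : nrm x ≠ 0 := (nrm_pos hx).ne'
  rw [Kfun_eq_radialField]
  exact Dq_radialField_add_smul_eq_zero hx (hasDerivAt_kScalar α hr) (hasDerivAt_kVector α hr)
end
end

section
/- Let α ∈ ℂ, β ∈ ℂ with 1 + αβ ≠ 0 and 1 - αβ ≠ 0, and let E, H : Ω → ℂ³ be C¹ vector fields on an open set Ω ⊆ ℝ³ with div E = div H = 0, satisfying the chiral Maxwell system rot E = -iα(H + β rot H) and rot H = iα(E + β rot E). Then φ = E + iH satisfies (D + α₁)φ = 0 and ψ = E - iH satisfies (D - α₂)ψ = 0, where α₁ = α/(1+αβ) and α₂ = α/(1-αβ). -/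
noncomputable section

/-- componentwise smoothness of ℂ³-valued fields -/
def VContDiffOn (n : ℕ∞) (F : V3 → Fin 3 → ℂ) (s : Set V3) : Prop :=
  ∀ k, ContDiffOn ℝ n (fun x => F x k) s

/-!
For `s = ±1`, adding `s i` times the second Maxwell equation to the first decouples the system:
`F = E + s i H` satisfies `(1 + sαβ) rot F = -sα F`. As `F` is divergence free, `D F = rot F`,
so `F` is an eigenfunction of `D` with eigenvalue `-sα / (1 + sαβ)`.
-/

open Complex Topology

@[simp]
lemma pd_const {F : Type*} [NormedAddCommGroup F] [NormedSpace ℝ F] (k : Fin 3) (c : F)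
    (x : V3) : pd k (fun _ => c) x = 0 := by
  simp [pd]

lemma pd_add_const_mul {f g : V3 → ℂ} {x : V3} (hf : DifferentiableAt ℝ f x)
    (hg : DifferentiableAt ℝ g x) (k : Fin 3) (c : ℂ) :
    pd k (fun y => f y + c * g y) x = pd k f x + c * pd k g x := by
  have hsum : HasFDerivAt (fun y => f y + c * g y) (fderiv ℝ f x + c • fderiv ℝ g x) x :=
    hf.hasFDerivAt.add (hg.hasFDerivAt.const_mul c)
  rw [pd, hsum.fderiv]
  rfl

section Linearity

variable {E H : V3 → Fin 3 → ℂ} {x : V3}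

lemma dvg_add_const_mul (hE : ∀ j, DifferentiableAt ℝ (fun y => E y j) x)
    (hH : ∀ j, DifferentiableAt ℝ (fun y => H y j) x) (c : ℂ) :
    dvg (fun y k => E y k + c * H y k) x = dvg E x + c * dvg H x := by
  simp only [dvg, pd_add_const_mul (hE _) (hH _)]
  ring

lemma rot_add_const_mul (hE : ∀ j, DifferentiableAt ℝ (fun y => E y j) x)
    (hH : ∀ j, DifferentiableAt ℝ (fun y => H y j) x) (c : ℂ) :
    rot (fun y k => E y k + c * H y k) x = rot E x + c • rot H x := by
  ext k
  fin_cases k <;> simp [rot, pd_add_const_mul (hE _) (hH _)] <;> ring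

end Linearity

lemma Dq_vecq (F : V3 → Fin 3 → ℂ) (x : V3) :
    Dq (fun y => vecq (F y)) x = scq (-dvg F x) + vecq (rot F x) := by
  simp only [Quaternion.ext_iff, Dq, Quaternion.re_add, Quaternion.imI_add, Quaternion.imJ_add,
    Quaternion.imK_add, Quaternion.re_mul, Quaternion.imI_mul, Quaternion.imJ_mul,
    Quaternion.imK_mul]
  simp [qpd, e1, e2, e3, scq, vecq, dvg, rot]
  refine ⟨?_, ?_, ?_, ?_⟩ <;> ring

lemma Dq_vecq_add_smul_eq_zero {F : V3 → Fin 3 → ℂ} {x : V3} {μ : ℂ}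
    (hdiv : dvg F x = 0) (hrot : rot F x = -μ • F x) :
    Dq (fun y => vecq (F y)) x + μ • vecq (F x) = 0 := by
  rw [Dq_vecq, hdiv, hrot]
  simp only [Quaternion.ext_iff, Quaternion.re_add, Quaternion.imI_add, Quaternion.imJ_add,
    Quaternion.imK_add, Quaternion.re_smul, Quaternion.imI_smul, Quaternion.imJ_smul,
    Quaternion.imK_smul, Quaternion.re_zero, Quaternion.imI_zero, Quaternion.imJ_zero,
    Quaternion.imK_zero]
  simp [scq, vecq]

lemma VContDiffOn.differentiableAt {n : ℕ∞} {F : V3 → Fin 3 → ℂ} {s : Set V3} {x : V3}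
    (hF : VContDiffOn n F s) (hn : n ≠ 0) (hs : s ∈ 𝓝 x) (j : Fin 3) :
    DifferentiableAt ℝ (fun y => F y j) x :=
  ((hF j).contDiffAt hs).differentiableAt (by exact_mod_cast hn)

-- `neg_smul` does not rewrite here: this `SMul ℂ HC` instance is not reducibly the module one.
lemma HC.neg_smul (a : ℂ) (q : HC) : (-a) • q = -(a • q) :=
  _root_.neg_smul a q

section ChiralMaxwell

variable {α β s : ℂ} {e h re rh : Fin 3 → ℂ}

lemma rot_chiral_combination (hs : s ^ 2 = 1)
    (hre : re = fun k => -I * α * (h k + β * rh k))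
    (hrh : rh = fun k => I * α * (e k + β * re k)) :
    (1 + s * α * β) • (re + (s * I) • rh) = (-(s * α)) • (e + (s * I) • h) := by
  ext k
  have hre_k := congrFun hre k
  have hrh_k := congrFun hrh k
  simp only [Pi.smul_apply, Pi.add_apply, smul_eq_mul] at hre_k hrh_k ⊢
  linear_combination hre_k + s * I * hrh_k + s * α * (β * re k + e k) * I_sq
    + α * I * (β * rh k + h k) * hs

variable {E H : V3 → Fin 3 → ℂ} {x : V3}

lemma Dq_chiral_combination_add_smul_eq_zero
    (hE : ∀ j, DifferentiableAt ℝ (fun y => E y j) x)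
    (hH : ∀ j, DifferentiableAt ℝ (fun y => H y j) x)
    (hdE : dvg E x = 0) (hdH : dvg H x = 0)
    (hrE : rot E x = fun k => -I * α * (H x k + β * rot H x k))
    (hrH : rot H x = fun k => I * α * (E x k + β * rot E x k))
    (hs : s ^ 2 = 1) (hne : 1 + s * α * β ≠ 0) :
    Dq (fun y => vecq fun k => E y k + s * I * H y k) x
      + (s * α / (1 + s * α * β)) • vecq (fun k => E x k + s * I * H x k) = 0 := by
  apply Dq_vecq_add_smul_eq_zero
  · rw [dvg_add_const_mul hE hH, hdE, hdH, mul_zero, add_zero]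
  · rw [rot_add_const_mul hE hH, ← neg_div, div_eq_inv_mul, mul_smul (1 + s * α * β)⁻¹,
      eq_inv_smul_iff₀ hne]
    exact rot_chiral_combination hs hrE hrH

end ChiralMaxwell

/-- diagonalization of the chiral Maxwell system. -/
theorem stmt4 (α β : ℂ) (h1 : 1 + α * β ≠ 0) (h2 : 1 - α * β ≠ 0)
    (Ω : Set V3) (hΩ : IsOpen Ω) (E H : V3 → Fin 3 → ℂ)
    (hE : VContDiffOn 1 E Ω) (hH : VContDiffOn 1 H Ω)
    (hdE : ∀ x ∈ Ω, dvg E x = 0) (hdH : ∀ x ∈ Ω, dvg H x = 0)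
    (hrE : ∀ x ∈ Ω, rot E x = fun k => -Complex.I * α * (H x k + β * rot H x k))
    (hrH : ∀ x ∈ Ω, rot H x = fun k => Complex.I * α * (E x k + β * rot E x k)) :
    ∀ x ∈ Ω,
      (Dq (fun y => vecq fun k => E y k + Complex.I * H y k) x
        + (α / (1 + α * β)) • vecq (fun k => E x k + Complex.I * H x k) = 0) ∧
      (Dq (fun y => vecq fun k => E y k - Complex.I * H y k) x
        - (α / (1 - α * β)) • vecq (fun k => E x k - Complex.I * H x k) = 0) := by
  intro x hx
  have hOx := hΩ.mem_nhds hx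
  have hD := fun s => Dq_chiral_combination_add_smul_eq_zero (s := s)
    (hE.differentiableAt one_ne_zero hOx) (hH.differentiableAt one_ne_zero hOx)
    (hdE x hx) (hdH x hx) (hrE x hx) (hrH x hx)
  constructor
  · simpa using hD 1 (one_pow 2) (by simpa using h1)
  · have hψ := hD (-1) (by norm_num) (by simpa [sub_eq_add_neg] using h2)
    simpa [sub_eq_add_neg, neg_div, HC.neg_smul] using hψ
end
end

section
/- Let ε, μ : Ω → ℝ be positive C¹ functions on an open set Ω ⊆ ℝ³ and E, H, j : ℝ × Ω → ℝ³, ρ : ℝ × Ω → ℝ. Set c = 1/√(εμ), ℰ = √ε E, ℋ = √μ H, V = ℰ + iℋ, c⃗ = grad(√c)/√c, W⃗ = grad(√W)/√W with W = √μ/√ε. Then E and H solve the inhomogeneous Maxwell system rot H = ε∂ₜE + j, rot E = -μ∂ₜH, div(εE) = ρ, div(μH) = 0 if and only if V solves the single biquaternionic equation ((1/c)∂ₜ + iD)V - V(i c⃗) - V*(i W⃗) = -(√μ j + iρ/√ε), where V* denotes componentwise complex conjugation of V and the products V(ic⃗), V*(iW⃗) are quaternionic products from the right. -/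
noncomputable section

/-- time derivative ∂ₜ for functions on ℝ × ℝ³ -/
noncomputable def pdt {E : Type*} [NormedAddCommGroup E] [NormedSpace ℝ E]
    (g : ℝ × V3 → E) (p : ℝ × V3) : E :=
  fderiv ℝ g p (1, 0)

/-- componentwise time derivative of an ℍ(ℂ)-valued function -/
noncomputable def qpdt (F : ℝ × V3 → HC) (p : ℝ × V3) : HC :=
  ⟨pdt (fun q => (F q).re) p, pdt (fun q => (F q).imI) p,
   pdt (fun q => (F q).imJ) p, pdt (fun q => (F q).imK) p⟩

/-- the spatial Dirac operator acting on time-dependent quaternionic fields -/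
noncomputable def DqT (F : ℝ × V3 → HC) (p : ℝ × V3) : HC :=
  Dq (fun y => F (p.1, y)) p.2

/-- spatial componentwise Laplacian for time-dependent quaternionic fields -/
noncomputable def qlapT (F : ℝ × V3 → HC) (p : ℝ × V3) : HC :=
  qlap (fun y => F (p.1, y)) p.2

/-- componentwise smoothness of time-dependent quaternionic fields -/
def QCT (n : ℕ∞) (F : ℝ × V3 → HC) : Prop :=
  ContDiff ℝ n (fun p => (F p).re) ∧ ContDiff ℝ n (fun p => (F p).imI) ∧
  ContDiff ℝ n (fun p => (F p).imJ) ∧ ContDiff ℝ n (fun p => (F p).imK)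

/-- speed of light c = 1/√(εμ) in an inhomogeneous medium -/
noncomputable def cfun (ε μ : V3 → ℝ) (x : V3) : ℝ := 1 / Real.sqrt (ε x * μ x)

/-- intrinsic wave impedance W = √μ/√ε -/
noncomputable def Wfun (ε μ : V3 → ℝ) (x : V3) : ℝ := Real.sqrt (μ x) / Real.sqrt (ε x)

/-- c⃗ = grad(√c)/√c -/
noncomputable def cvec (ε μ : V3 → ℝ) (x : V3) : Fin 3 → ℝ :=
  fun k => pd k (fun y => Real.sqrt (cfun ε μ y)) x / Real.sqrt (cfun ε μ x)

/-- W⃗ = grad(√W)/√W -/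
noncomputable def Wvec (ε μ : V3 → ℝ) (x : V3) : Fin 3 → ℝ :=
  fun k => pd k (fun y => Real.sqrt (Wfun ε μ y)) x / Real.sqrt (Wfun ε μ x)

/-- V = √ε E + i√μ H as a purely vectorial biquaternion -/
noncomputable def Vq (ε μ : V3 → ℝ) (E H : ℝ × V3 → Fin 3 → ℝ) (p : ℝ × V3) : HC :=
  vecq fun k => ((Real.sqrt (ε p.2) * E p k : ℝ) : ℂ)
    + Complex.I * ((Real.sqrt (μ p.2) * H p k : ℝ) : ℂ)

/-- V* (componentwise complex conjugate of V) -/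
noncomputable def Vqst (ε μ : V3 → ℝ) (E H : ℝ × V3 → Fin 3 → ℝ) (p : ℝ × V3) : HC :=
  vecq fun k => ((Real.sqrt (ε p.2) * E p k : ℝ) : ℂ)
    - Complex.I * ((Real.sqrt (μ p.2) * H p k : ℝ) : ℂ)
/-!
Write `a = √ε`, `b = √μ` at a point. Since `c = 1 / (a b)` and `W = b / a`, taking logarithmic
derivatives gives `c⃗ = -(∇ε/ε + ∇μ/μ)/4` and `W⃗ = (∇μ/μ - ∇ε/ε)/4`, so the two right
multiplications combine into `V c⃗ + V* W⃗ = -(a E)(∇a/a) - i (b H)(∇b/b)`. Added to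
`D V = D(a E) + i D(b H)` and using `u v + v u = -2 u·v` for vectors, this turns the left-hand side
plus `√μ j + i ρ/√ε` into the biquaternion
`div(μH)/b - i (div(εE) - ρ)/a - b (rot H - ε ∂ₜE - j) + i a (rot E + μ ∂ₜH)`,
whose four real components vanish exactly when Maxwell's equations hold.
-/

section LogDeriv

variable {X : Type*} [NormedAddCommGroup X] [NormedSpace ℝ X] {f g : X → ℝ} {x : X}

def logFDeriv (f : X → ℝ) (x v : X) : ℝ := fderiv ℝ f x v / f x

lemma logFDeriv_mul (hf : DifferentiableAt ℝ f x) (hg : DifferentiableAt ℝ g x)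
    (hfx : f x ≠ 0) (hgx : g x ≠ 0) (v : X) :
    logFDeriv (fun y => f y * g y) x v = logFDeriv f x v + logFDeriv g x v := by
  simp only [logFDeriv, fderiv_fun_mul hf hg, add_apply, smul_apply, smul_eq_mul]
  field_simp
  ring

lemma logFDeriv_inv (hf : DifferentiableAt ℝ f x) (hfx : f x ≠ 0) (v : X) :
    logFDeriv (fun y => (f y)⁻¹) x v = -logFDeriv f x v := by
  have h : HasFDerivAt (fun y => (f y)⁻¹) ((-(f x ^ 2)⁻¹) • fderiv ℝ f x) x :=
    (hasDerivAt_inv hfx).comp_hasFDerivAt x hf.hasFDerivAt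
  simp only [logFDeriv, h.fderiv, smul_apply, smul_eq_mul]
  field_simp

lemma logFDeriv_div (hf : DifferentiableAt ℝ f x) (hg : DifferentiableAt ℝ g x)
    (hfx : f x ≠ 0) (hgx : g x ≠ 0) (v : X) :
    logFDeriv (fun y => f y / g y) x v = logFDeriv f x v - logFDeriv g x v := by
  simp only [div_eq_mul_inv]
  rw [logFDeriv_mul (g := fun y => (g y)⁻¹) hf (hg.inv hgx) hfx (inv_ne_zero hgx),
    logFDeriv_inv hg hgx, sub_eq_add_neg]

lemma logFDeriv_sqrt (hf : DifferentiableAt ℝ f x) (hfx : 0 < f x) (v : X) :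
    logFDeriv (fun y => √(f y)) x v = logFDeriv f x v / 2 := by
  have hs : √(f x) ≠ 0 := (Real.sqrt_pos.2 hfx).ne'
  simp only [logFDeriv, fderiv_sqrt hf hfx.ne', smul_apply, smul_eq_mul]
  field_simp
  rw [Real.sq_sqrt hfx.le, mul_comm]

lemma fderiv_apply_eq_mul_logFDeriv (hfx : f x ≠ 0) (v : X) :
    fderiv ℝ f x v = f x * logFDeriv f x v := by
  rw [logFDeriv, mul_div_cancel₀ _ hfx]

end LogDeriv

def lgrad (f : V3 → ℝ) (x : V3) : Fin 3 → ℝ := fun k => logFDeriv f x (Pi.single k 1)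

lemma grad_eq_smul_lgrad {f : V3 → ℝ} {x : V3} (hfx : f x ≠ 0) : grad f x = f x • lgrad f x :=
  funext fun _ => fderiv_apply_eq_mul_logFDeriv hfx _

lemma fderiv_fun_mul_apply {X : Type*} [NormedAddCommGroup X] [NormedSpace ℝ X]
    {f g : X → ℝ} {x : X} (hf : DifferentiableAt ℝ f x) (hg : DifferentiableAt ℝ g x) (v : X) :
    fderiv ℝ (fun y => f y * g y) x v = fderiv ℝ f x v * g x + f x * fderiv ℝ g x v := by
  simp only [fderiv_fun_mul hf hg, add_apply, smul_apply, smul_eq_mul]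
  ring

lemma fderiv_ofReal_add_I_mul_apply {X : Type*} [NormedAddCommGroup X] [NormedSpace ℝ X]
    {f g : X → ℝ} {x : X} (hf : DifferentiableAt ℝ f x) (hg : DifferentiableAt ℝ g x) (v : X) :
    fderiv ℝ (fun y => (f y : ℂ) + Complex.I * (g y : ℂ)) x v
      = (fderiv ℝ f x v : ℂ) + Complex.I * (fderiv ℝ g x v : ℂ) := by
  have hf' : HasFDerivAt (fun y => (f y : ℂ)) (Complex.ofRealCLM.comp (fderiv ℝ f x)) x :=
    Complex.ofRealCLM.hasFDerivAt.comp x hf.hasFDerivAt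
  have hg' : HasFDerivAt (fun y => (g y : ℂ)) (Complex.ofRealCLM.comp (fderiv ℝ g x)) x :=
    Complex.ofRealCLM.hasFDerivAt.comp x hg.hasFDerivAt
  rw [(hf'.fun_add (hg'.const_mul Complex.I)).fderiv]
  rfl

def vecqReIm (u v : Fin 3 → ℝ) : HC := vecq fun m => (u m : ℂ) + Complex.I * (v m : ℂ)

lemma Vq_eq_vecqReIm (ε μ : V3 → ℝ) (E H : ℝ × V3 → Fin 3 → ℝ) (p : ℝ × V3) :
    Vq ε μ E H p = vecqReIm (√(ε p.2) • E p) (√(μ p.2) • H p) := rfl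

lemma Vqst_eq_vecqReIm (ε μ : V3 → ℝ) (E H : ℝ × V3 → Fin 3 → ℝ) (p : ℝ × V3) :
    Vqst ε μ E H p = vecqReIm (√(ε p.2) • E p) (-(√(μ p.2) • H p)) := by
  simp only [Vqst, vecqReIm, Pi.neg_apply, Pi.smul_apply, smul_eq_mul, Complex.ofReal_neg,
    mul_neg, sub_eq_add_neg]

lemma fderiv_vecqReIm {X : Type*} [NormedAddCommGroup X] [NormedSpace ℝ X]
    {u v : X → Fin 3 → ℝ} {x : X} (hu : ∀ m, DifferentiableAt ℝ (fun y => u y m) x)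
    (hv : ∀ m, DifferentiableAt ℝ (fun y => v y m) x) (w : X) :
    (⟨fderiv ℝ (fun y => (vecqReIm (u y) (v y)).re) x w,
      fderiv ℝ (fun y => (vecqReIm (u y) (v y)).imI) x w,
      fderiv ℝ (fun y => (vecqReIm (u y) (v y)).imJ) x w,
      fderiv ℝ (fun y => (vecqReIm (u y) (v y)).imK) x w⟩ : HC)
      = vecqReIm (fun m => fderiv ℝ (fun y => u y m) x w)
          (fun m => fderiv ℝ (fun y => v y m) x w) := by
  ext
  · simp [vecqReIm, vecq]
  all_goals exact fderiv_ofReal_add_I_mul_apply (hu _) (hv _) w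

lemma scq_add_vecqReIm_eq_zero_iff {r s : ℝ} {u v : Fin 3 → ℝ} :
    scq ((r : ℂ) + Complex.I * (s : ℂ)) + vecqReIm u v = 0 ↔ r = 0 ∧ s = 0 ∧ u = 0 ∧ v = 0 := by
  have hc : ∀ x y : ℝ, (x : ℂ) + Complex.I * (y : ℂ) = 0 ↔ x = 0 ∧ y = 0 := by
    simp [Complex.ext_iff]
  rw [Quaternion.ext_iff]
  simp only [Quaternion.re_add, Quaternion.imI_add, Quaternion.imJ_add, Quaternion.imK_add,
    Quaternion.re_zero, Quaternion.imI_zero, Quaternion.imJ_zero, Quaternion.imK_zero]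
  simp only [scq, vecqReIm, vecq, add_zero, zero_add, hc, funext_iff, Fin.forall_fin_succ,
    IsEmpty.forall_iff, and_true, Pi.zero_apply, Fin.succ_zero_eq_one, Fin.succ_one_eq_two]
  tauto

def curlOfJac (d : Matrix (Fin 3) (Fin 3) ℝ) : Fin 3 → ℝ :=
  ![d 1 2 - d 2 1, d 2 0 - d 0 2, d 0 1 - d 1 0]

def jac (F : V3 → Fin 3 → ℝ) (x : V3) : Matrix (Fin 3) (Fin 3) ℝ :=
  fun k m => pd k (fun y => F y m) x

lemma rot_eq_curlOfJac (F : V3 → Fin 3 → ℝ) (x : V3) : rot F x = curlOfJac (jac F x) := rfl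

lemma dvg_eq_trace_jac (F : V3 → Fin 3 → ℝ) (x : V3) : dvg F x = (jac F x).trace := by
  simp [dvg, Matrix.trace, Fin.sum_univ_three, jac]

lemma dvg_mul {f : V3 → ℝ} {F : V3 → Fin 3 → ℝ} {x : V3} (hf : DifferentiableAt ℝ f x)
    (hF : ∀ m, DifferentiableAt ℝ (fun y => F y m) x) :
    dvg (fun y m => f y * F y m) x = grad f x ⬝ᵥ F x + f x * dvg F x := by
  simp only [dvg, pd, grad, fderiv_fun_mul_apply hf (hF _), dotProduct, Fin.sum_univ_three]
  ring

lemma div_sqrt_sub_sqrt_mul_eq_zero_iff {ε ρ s : ℝ} (hε : 0 < ε) :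
    ρ / √ε - √ε * s = 0 ↔ ε * s = ρ := by
  rw [sub_eq_zero, div_eq_iff (Real.sqrt_pos.2 hε).ne', mul_right_comm, Real.mul_self_sqrt hε.le,
    eq_comm]

section Medium

variable {ε μ : V3 → ℝ} {x : V3}

lemma inv_cfun (hε : 0 < ε x) : (cfun ε μ x)⁻¹ = √(ε x) * √(μ x) := by
  rw [cfun, one_div, inv_inv, Real.sqrt_mul hε.le]

lemma cvec_eq (hεd : DifferentiableAt ℝ ε x) (hμd : DifferentiableAt ℝ μ x)
    (hε : 0 < ε x) (hμ : 0 < μ x) (k : Fin 3) :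
    cvec ε μ x k = -(lgrad ε x k + lgrad μ x k) / 4 := by
  have hεμ : 0 < ε x * μ x := mul_pos hε hμ
  have hs : DifferentiableAt ℝ (fun y => √(ε y * μ y)) x := (hεd.mul hμd).sqrt hεμ.ne'
  have hc : cfun ε μ = fun y => (√(ε y * μ y))⁻¹ := funext fun y => one_div _
  have hcpos : 0 < cfun ε μ x := by rw [cfun]; positivity
  change logFDeriv (fun y => √(cfun ε μ y)) x (Pi.single k 1) = _
  rw [logFDeriv_sqrt (by rw [hc]; exact hs.inv (by positivity)) hcpos, hc,
    logFDeriv_inv hs (by positivity),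
    logFDeriv_sqrt (f := fun y => ε y * μ y) (hεd.mul hμd) hεμ,
    logFDeriv_mul hεd hμd hε.ne' hμ.ne']
  unfold lgrad
  ring

lemma Wvec_eq (hεd : DifferentiableAt ℝ ε x) (hμd : DifferentiableAt ℝ μ x)
    (hε : 0 < ε x) (hμ : 0 < μ x) (k : Fin 3) :
    Wvec ε μ x k = (lgrad μ x k - lgrad ε x k) / 4 := by
  have hsε : DifferentiableAt ℝ (fun y => √(ε y)) x := hεd.sqrt hε.ne'
  have hsμ : DifferentiableAt ℝ (fun y => √(μ y)) x := hμd.sqrt hμ.ne'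
  have hW : DifferentiableAt ℝ (fun y => √(μ y) / √(ε y)) x := by
    simpa only [div_eq_mul_inv] using hsμ.fun_mul (hsε.fun_inv (Real.sqrt_pos.2 hε).ne')
  have hWpos : 0 < Wfun ε μ x := by rw [Wfun]; positivity
  change logFDeriv (fun y => √(Wfun ε μ y)) x (Pi.single k 1) = _
  rw [logFDeriv_sqrt (f := Wfun ε μ) hW hWpos]
  unfold Wfun
  rw [logFDeriv_div hsμ hsε (by positivity) (by positivity), logFDeriv_sqrt hμd hμ,
    logFDeriv_sqrt hεd hε]
  unfold lgrad
  ring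

end Medium

section Field

variable {ε μ : V3 → ℝ} {E H : ℝ × V3 → Fin 3 → ℝ}

lemma qpd_Vq {t : ℝ} {x : V3} (hεd : DifferentiableAt ℝ ε x) (hμd : DifferentiableAt ℝ μ x)
    (hε : 0 < ε x) (hμ : 0 < μ x) (hE : ∀ m, DifferentiableAt ℝ (fun y => E (t, y) m) x)
    (hH : ∀ m, DifferentiableAt ℝ (fun y => H (t, y) m) x) (k : Fin 3) :
    qpd k (fun y => Vq ε μ E H (t, y)) x
      = vecqReIm
          (fun m => √(ε x) * (lgrad ε x k / 2 * E (t, x) m + jac (fun y => E (t, y)) x k m))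
          (fun m => √(μ x) * (lgrad μ x k / 2 * H (t, x) m + jac (fun y => H (t, y)) x k m)) := by
  have hsε : DifferentiableAt ℝ (fun y => √(ε y)) x := hεd.sqrt hε.ne'
  have hsμ : DifferentiableAt ℝ (fun y => √(μ y)) x := hμd.sqrt hμ.ne'
  have hdsε (v : V3) : fderiv ℝ (fun y => √(ε y)) x v = √(ε x) * (logFDeriv ε x v / 2) := by
    rw [fderiv_apply_eq_mul_logFDeriv (f := fun y => √(ε y)) (Real.sqrt_pos.2 hε).ne',
      logFDeriv_sqrt hεd hε]
  have hdsμ (v : V3) : fderiv ℝ (fun y => √(μ y)) x v = √(μ x) * (logFDeriv μ x v / 2) := by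
    rw [fderiv_apply_eq_mul_logFDeriv (f := fun y => √(μ y)) (Real.sqrt_pos.2 hμ).ne',
      logFDeriv_sqrt hμd hμ]
  refine (fderiv_vecqReIm (u := fun y => √(ε y) • E (t, y)) (v := fun y => √(μ y) • H (t, y))
    (fun m => hsε.mul (hE m)) (fun m => hsμ.mul (hH m)) (Pi.single k 1)).trans ?_
  simp only [Pi.smul_apply, smul_eq_mul, fderiv_fun_mul_apply hsε (hE _),
    fderiv_fun_mul_apply hsμ (hH _), hdsε, hdsμ, lgrad, jac, pd]
  congr 1 <;> funext m <;> ring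

lemma qpdt_Vq {p : ℝ × V3} (hεd : DifferentiableAt ℝ ε p.2) (hμd : DifferentiableAt ℝ μ p.2)
    (hε : 0 < ε p.2) (hμ : 0 < μ p.2) (hE : ∀ m, DifferentiableAt ℝ (fun q => E q m) p)
    (hH : ∀ m, DifferentiableAt ℝ (fun q => H q m) p) :
    qpdt (Vq ε μ E H) p = vecqReIm (√(ε p.2) • pdt E p) (√(μ p.2) • pdt H p) := by
  have hsε : HasFDerivAt (fun q : ℝ × V3 => √(ε q.2))
      ((fderiv ℝ (fun y => √(ε y)) p.2).comp (ContinuousLinearMap.snd ℝ ℝ V3)) p :=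
    (hεd.sqrt hε.ne').hasFDerivAt.comp p hasFDerivAt_snd
  have hsμ : HasFDerivAt (fun q : ℝ × V3 => √(μ q.2))
      ((fderiv ℝ (fun y => √(μ y)) p.2).comp (ContinuousLinearMap.snd ℝ ℝ V3)) p :=
    (hμd.sqrt hμ.ne').hasFDerivAt.comp p hasFDerivAt_snd
  refine (fderiv_vecqReIm (u := fun q => √(ε q.2) • E q) (v := fun q => √(μ q.2) • H q)
    (fun m => hsε.differentiableAt.mul (hE m)) (fun m => hsμ.differentiableAt.mul (hH m))
    (1, 0)).trans ?_
  simp only [Pi.smul_apply, smul_eq_mul, fderiv_fun_mul_apply hsε.differentiableAt (hE _),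
    fderiv_fun_mul_apply hsμ.differentiableAt (hH _), hsε.fderiv, hsμ.fderiv, pdt,
    fderiv_pi hE, fderiv_pi hH, ContinuousLinearMap.comp_apply, ContinuousLinearMap.coe_snd',
    map_zero, zero_mul, zero_add, ContinuousLinearMap.coe_pi']
  rfl

end Field

/-- `a`, `b` stand for `√ε`, `√μ`, `α`, `β` for the logarithmic gradients `∇ε/ε`, `∇μ/μ`, and
`DV k` for `∂ₖ V`. -/
lemma biquaternion_residual_eq (a b : ℝ) (α β E H Et Ht J : Fin 3 → ℝ) (ρ : ℝ)
    (dE dH : Matrix (Fin 3) (Fin 3) ℝ) (DV : Fin 3 → HC)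
    (hDV : ∀ k, DV k = vecqReIm (fun m => a * (α k / 2 * E m + dE k m))
      (fun m => b * (β k / 2 * H m + dH k m))) :
    ((a * b : ℝ) : ℂ) • vecqReIm (a • Et) (b • Ht)
      + Complex.I • (e1 * DV 0 + e2 * DV 1 + e3 * DV 2)
      - vecqReIm (a • E) (b • H) * (Complex.I • vecq fun k => ((-(α k + β k) / 4 : ℝ) : ℂ))
      - vecqReIm (a • E) (-(b • H)) * (Complex.I • vecq fun k => (((β k - α k) / 4 : ℝ) : ℂ))
      + (vecq (fun k => ((b * J k : ℝ) : ℂ)) + scq (Complex.I * (ρ : ℂ) / (a : ℂ)))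
    = scq (((b * (β ⬝ᵥ H + dH.trace) : ℝ) : ℂ)
          + Complex.I * ((ρ / a - a * (α ⬝ᵥ E + dE.trace) : ℝ) : ℂ))
      + vecqReIm (-(b • (curlOfJac dH - ((a * a) • Et + J))))
          (a • (curlOfJac dE + (b * b) • Ht)) := by
  have hρ : Complex.I * (ρ : ℂ) / (a : ℂ) = Complex.I * ((ρ / a : ℝ) : ℂ) := by
    rw [Complex.ofReal_div, mul_div_assoc]
  simp only [hDV, hρ]
  apply Quaternion.ext <;>
  simp only [Quaternion.re_add, Quaternion.imI_add, Quaternion.imJ_add, Quaternion.imK_add,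
    Quaternion.re_sub, Quaternion.imI_sub, Quaternion.imJ_sub, Quaternion.imK_sub,
    Quaternion.re_mul, Quaternion.imI_mul, Quaternion.imJ_mul, Quaternion.imK_mul,
    Quaternion.re_smul, Quaternion.imI_smul, Quaternion.imJ_smul, Quaternion.imK_smul] <;>
  simp only [vecqReIm, vecq, scq, e1, e2, e3, curlOfJac, dotProduct, Matrix.trace,
    Fin.sum_univ_three, Matrix.diag_apply, Matrix.cons_val_zero, Matrix.cons_val_one,
    Matrix.cons_val_two, Matrix.tail_cons, Matrix.head_cons, Pi.add_apply, Pi.sub_apply,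
    Pi.neg_apply, Pi.smul_apply, smul_eq_mul] <;>
  apply Complex.ext <;>
  simp only [Complex.add_re, Complex.add_im, Complex.sub_re, Complex.sub_im,
    Complex.mul_re, Complex.mul_im, Complex.I_re, Complex.I_im,
    Complex.ofReal_re, Complex.ofReal_im, Complex.zero_re, Complex.zero_im, Complex.one_re,
    Complex.one_im] <;>
  ring

lemma maxwell_iff_biquaternion_at {ε μ : V3 → ℝ} {E H : ℝ × V3 → Fin 3 → ℝ}
    (j : ℝ × V3 → Fin 3 → ℝ) (ρ : ℝ × V3 → ℝ) {p : ℝ × V3}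
    (hεd : DifferentiableAt ℝ ε p.2) (hμd : DifferentiableAt ℝ μ p.2)
    (hε : 0 < ε p.2) (hμ : 0 < μ p.2) (hE : ∀ m, DifferentiableAt ℝ (fun q => E q m) p)
    (hH : ∀ m, DifferentiableAt ℝ (fun q => H q m) p) :
    ((rot (fun y => H (p.1, y)) p.2 = ε p.2 • pdt E p + j p) ∧
      (rot (fun y => E (p.1, y)) p.2 = -(μ p.2 • pdt H p)) ∧
      dvg (fun y k => ε y * E (p.1, y) k) p.2 = ρ p ∧
      dvg (fun y k => μ y * H (p.1, y) k) p.2 = 0)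
    ↔
    ((((cfun ε μ p.2)⁻¹ : ℝ) : ℂ) • qpdt (Vq ε μ E H) p
        + Complex.I • DqT (Vq ε μ E H) p
        - Vq ε μ E H p * (Complex.I • vecq fun k => ((cvec ε μ p.2 k : ℝ) : ℂ))
        - Vqst ε μ E H p * (Complex.I • vecq fun k => ((Wvec ε μ p.2 k : ℝ) : ℂ))
      = -(vecq (fun k => ((Real.sqrt (μ p.2) * j p k : ℝ) : ℂ))
          + scq (Complex.I * ((ρ p : ℝ) : ℂ) / ((Real.sqrt (ε p.2) : ℝ) : ℂ)))) := by
  obtain ⟨t, x⟩ := p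
  dsimp only at hεd hμd hε hμ ⊢
  have hEs : ∀ m, DifferentiableAt ℝ (fun y => E (t, y) m) x := fun m =>
    (hE m).comp x ((differentiableAt_const t).prodMk differentiableAt_id)
  have hHs : ∀ m, DifferentiableAt ℝ (fun y => H (t, y) m) x := fun m =>
    (hH m).comp x ((differentiableAt_const t).prodMk differentiableAt_id)
  simp only [DqT, Dq]
  rw [eq_neg_iff_add_eq_zero (b := vecq _ + scq _), Vq_eq_vecqReIm, Vqst_eq_vecqReIm, inv_cfun hε,
    qpdt_Vq hεd hμd hε hμ hE hH]
  simp only [cvec_eq hεd hμd hε hμ, Wvec_eq hεd hμd hε hμ]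
  rw [biquaternion_residual_eq (√(ε x)) (√(μ x)) (lgrad ε x) (lgrad μ x) (E (t, x)) (H (t, x))
    (pdt E (t, x)) (pdt H (t, x)) (j (t, x)) (ρ (t, x)) (jac (fun y => E (t, y)) x)
    (jac (fun y => H (t, y)) x) (fun k => qpd k (fun y => Vq ε μ E H (t, y)) x)
    (qpd_Vq hεd hμd hε hμ hEs hHs), scq_add_vecqReIm_eq_zero_iff,
    Real.mul_self_sqrt hε.le, Real.mul_self_sqrt hμ.le]
  rw [rot_eq_curlOfJac, rot_eq_curlOfJac, dvg_mul (F := fun y => E (t, y)) hεd hEs,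
    dvg_mul (F := fun y => H (t, y)) hμd hHs, dvg_eq_trace_jac, dvg_eq_trace_jac,
    grad_eq_smul_lgrad hε.ne', grad_eq_smul_lgrad hμ.ne', smul_dotProduct, smul_dotProduct,
    smul_eq_mul, smul_eq_mul, ← mul_add, ← mul_add]
  have hsε : √(ε x) ≠ 0 := (Real.sqrt_pos.2 hε).ne'
  have hsμ : √(μ x) ≠ 0 := (Real.sqrt_pos.2 hμ).ne'
  rw [div_sqrt_sub_sqrt_mul_eq_zero_iff hε]
  simp only [mul_eq_zero, smul_eq_zero, neg_eq_zero, hsε, hsμ, hμ.ne', false_or, sub_eq_zero,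
    add_eq_zero_iff_eq_neg]
  tauto

/-- the Maxwell system for an inhomogeneous medium is equivalent to the
single biquaternionic equation ((1/c)∂ₜ + iD)V - V(ic⃗) - V*(iW⃗) = -(√μ j + iρ/√ε). -/
theorem stmt10 (Ω : Set V3) (hΩ : IsOpen Ω) (ε μ : V3 → ℝ)
    (hεs : ContDiffOn ℝ 1 ε Ω) (hμs : ContDiffOn ℝ 1 μ Ω)
    (hε : ∀ x ∈ Ω, 0 < ε x) (hμ : ∀ x ∈ Ω, 0 < μ x)
    (E H j : ℝ × V3 → Fin 3 → ℝ) (ρ : ℝ × V3 → ℝ)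
    (hE : ∀ k, ContDiffOn ℝ 1 (fun p => E p k) (Set.univ ×ˢ Ω))
    (hH : ∀ k, ContDiffOn ℝ 1 (fun p => H p k) (Set.univ ×ˢ Ω)) :
    (∀ p : ℝ × V3, p.2 ∈ Ω →
      (rot (fun y => H (p.1, y)) p.2 = ε p.2 • pdt E p + j p) ∧
      (rot (fun y => E (p.1, y)) p.2 = -(μ p.2 • pdt H p)) ∧
      dvg (fun y k => ε y * E (p.1, y) k) p.2 = ρ p ∧
      dvg (fun y k => μ y * H (p.1, y) k) p.2 = 0)
    ↔
    (∀ p : ℝ × V3, p.2 ∈ Ω →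
      (((cfun ε μ p.2)⁻¹ : ℝ) : ℂ) • qpdt (Vq ε μ E H) p
        + Complex.I • DqT (Vq ε μ E H) p
        - Vq ε μ E H p * (Complex.I • vecq fun k => ((cvec ε μ p.2 k : ℝ) : ℂ))
        - Vqst ε μ E H p * (Complex.I • vecq fun k => ((Wvec ε μ p.2 k : ℝ) : ℂ))
      = -(vecq (fun k => ((Real.sqrt (μ p.2) * j p k : ℝ) : ℂ))
          + scq (Complex.I * ((ρ p : ℝ) : ℂ) / ((Real.sqrt (ε p.2) : ℝ) : ℂ)))) := by
  refine forall_congr' fun p => imp_congr_right fun hp => ?_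
  have hΩp : Ω ∈ nhds p.2 := hΩ.mem_nhds hp
  have hΩp' : Set.univ ×ˢ Ω ∈ nhds p := (isOpen_univ.prod hΩ).mem_nhds ⟨trivial, hp⟩
  exact maxwell_iff_biquaternion_at j ρ
    ((hεs.contDiffAt hΩp).differentiableAt one_ne_zero)
    ((hμs.contDiffAt hΩp).differentiableAt one_ne_zero) (hε _ hp) (hμ _ hp)
    (fun m => ((hE m).contDiffAt hΩp').differentiableAt one_ne_zero)
    (fun m => ((hH m).contDiffAt hΩp').differentiableAt one_ne_zero)
end
end

section
/- Let f : Ω → ℂ be nonvanishing C¹ on an open Ω ⊆ ℝ³ and let W = W₀ + W⃗ : Ω → ℍ(ℂ) be a C² solution of the main quaternionic Vekua equation D W = (Df/f)·\bar{W}, where \bar{W} = W₀ - W⃗ is the quaternionic conjugate. Then: (i) the scalar part W₀ solves -ΔW₀ + (Δf/f)W₀ = 0; (ii) u := f⁻¹W₀ solves div(f² grad u) = 0; and (iii) v⃗ := fW⃗ solves rot(f⁻² rot v⃗) = 0. -/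
/-!
The vector part of the Vekua equation, multiplied by `f`, reads
`f ∇W₀ - W₀ ∇f = -(f rot W⃗ + ∇f × W⃗)`, that is `f² ∇(W₀/f) = -rot (f W⃗)`.
Taking the divergence gives (ii) because `div ∘ rot = 0`; dividing by `f²` and taking the curl
gives (iii) because `rot ∘ ∇ = 0`; and (i) is (ii) expanded with
`div (f ∇W₀ - W₀ ∇f) = f ΔW₀ - W₀ Δf`.
-/

noncomputable section

open Filter Topology Matrix

theorem Filter.EventuallyEq.eval {α ι β : Type*} {l : Filter α} {F G : α → ι → β}
    (hFG : F =ᶠ[l] G) (i : ι) : (fun y => F y i) =ᶠ[l] fun y => G y i :=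
  hFG.mono fun _ hy => congrFun hy i

section Linear

variable {E : Type*} [NormedAddCommGroup E] [NormedSpace ℝ E]

theorem Filter.EventuallyEq.pd_eq {g h : V3 → E} {x : V3} (hgh : g =ᶠ[𝓝 x] h) (k : Fin 3) :
    pd k g x = pd k h x := by
  simp only [pd, hgh.fderiv_eq]

theorem Filter.EventuallyEq.dvg_eq {F G : V3 → Fin 3 → E} {x : V3} (hFG : F =ᶠ[𝓝 x] G) :
    dvg F x = dvg G x := by
  simp only [dvg, (hFG.eval _).pd_eq]

theorem Filter.EventuallyEq.rot_eq {F G : V3 → Fin 3 → E} {x : V3} (hFG : F =ᶠ[𝓝 x] G) :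
    rot F x = rot G x := by
  simp only [rot, (hFG.eval _).pd_eq]

theorem pd_neg (k : Fin 3) (g : V3 → E) (x : V3) : pd k (fun y => -g y) x = -pd k g x := by
  simp [pd, fderiv_fun_neg]

theorem pd_sub {g h : V3 → E} {x : V3} (hg : DifferentiableAt ℝ g x)
    (hh : DifferentiableAt ℝ h x) (k : Fin 3) :
    pd k (fun y => g y - h y) x = pd k g x - pd k h x := by
  simp [pd, fderiv_fun_sub hg hh]

theorem grad_neg (g : V3 → E) (x : V3) : grad (fun y => -g y) x = -grad g x := by
  funext k
  exact pd_neg k g x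

theorem dvg_neg (F : V3 → Fin 3 → E) (x : V3) : dvg (fun y => -F y) x = -dvg F x := by
  simp only [dvg, Pi.neg_apply, pd_neg]
  abel

theorem ContDiffAt.differentiableAt_pd {g : V3 → E} {x : V3} (hg : ContDiffAt ℝ 2 g x)
    (k : Fin 3) : DifferentiableAt ℝ (pd k g) x :=
  ((hg.fderiv_right (m := 1) (by norm_num)).clm_apply contDiffAt_const).differentiableAt
    one_ne_zero

theorem ContDiffAt.pd_comm {g : V3 → E} {x : V3} (hg : ContDiffAt ℝ 2 g x) (i j : Fin 3) :
    pd i (pd j g) x = pd j (pd i g) x := by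
  have hd : DifferentiableAt ℝ (fderiv ℝ g) x :=
    (hg.fderiv_right (m := 1) (by norm_num)).differentiableAt one_ne_zero
  have hpd : ∀ v w : V3,
      fderiv ℝ (fun y => fderiv ℝ g y v) x w = fderiv ℝ (fderiv ℝ g) x w v :=
    fun v w => by simp [fderiv_clm_apply hd (differentiableAt_const v)]
  change fderiv ℝ (fun y => fderiv ℝ g y (Pi.single j 1)) x (Pi.single i 1)
    = fderiv ℝ (fun y => fderiv ℝ g y (Pi.single i 1)) x (Pi.single j 1)
  rw [hpd, hpd]
  exact hg.isSymmSndFDerivAt (by simp) _ _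

theorem dvg_rot_eq_zero {F : V3 → Fin 3 → E} {x : V3}
    (hF : ∀ i, ContDiffAt ℝ 2 (fun y => F y i) x) : dvg (rot F) x = 0 := by
  simp only [dvg, rot, Matrix.cons_val_zero, Matrix.cons_val_one, Matrix.cons_val_two,
    Matrix.head_cons, Matrix.tail_cons]
  rw [pd_sub ((hF 2).differentiableAt_pd 1) ((hF 1).differentiableAt_pd 2),
    pd_sub ((hF 0).differentiableAt_pd 2) ((hF 2).differentiableAt_pd 0),
    pd_sub ((hF 1).differentiableAt_pd 0) ((hF 0).differentiableAt_pd 1),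
    (hF 0).pd_comm 1 2, (hF 1).pd_comm 2 0, (hF 2).pd_comm 0 1]
  abel

theorem rot_grad_eq_zero {g : V3 → E} {x : V3} (hg : ContDiffAt ℝ 2 g x) :
    rot (grad g) x = 0 := by
  funext i
  fin_cases i <;> simp [rot, grad, hg.pd_comm]

end Linear

section Scalar

variable {𝕜 : Type*} [NormedField 𝕜] [NormedAlgebra ℝ 𝕜]

theorem pd_mul {a b : V3 → 𝕜} {x : V3} (ha : DifferentiableAt ℝ a x)
    (hb : DifferentiableAt ℝ b x) (k : Fin 3) :
    pd k (fun y => a y * b y) x = a x * pd k b x + pd k a x * b x := by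
  simp [pd, fderiv_fun_mul ha hb, mul_comm]

theorem pd_inv {a : V3 → 𝕜} {x : V3} (ha : DifferentiableAt ℝ a x) (h0 : a x ≠ 0)
    (k : Fin 3) :
    pd k (fun y => (a y)⁻¹) x = -pd k a x / a x ^ 2 := by
  change fderiv ℝ (Inv.inv ∘ a) x (Pi.single k 1) = _
  rw [((hasFDerivAt_inv' (𝕜 := ℝ) h0).comp x ha.hasFDerivAt).fderiv]
  simp only [ContinuousLinearMap.neg_comp, _root_.neg_apply, ContinuousLinearMap.comp_apply,
    ContinuousLinearMap.mulLeftRight_apply, pd]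
  field_simp

theorem sq_smul_grad_div {a b : V3 → 𝕜} {x : V3} (ha : DifferentiableAt ℝ a x)
    (hb : DifferentiableAt ℝ b x) (h0 : b x ≠ 0) :
    b x ^ 2 • grad (fun y => a y / b y) x = b x • grad a x - a x • grad b x := by
  funext k
  simp only [div_eq_mul_inv, grad, Pi.smul_apply, Pi.sub_apply, smul_eq_mul,
    pd_mul ha (hb.fun_inv h0), pd_inv hb h0]
  field_simp
  ring

theorem dvg_smul_grad_sub_smul_grad {a b : V3 → 𝕜} {x : V3} (ha : ContDiffAt ℝ 2 a x)
    (hb : ContDiffAt ℝ 2 b x) :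
    dvg (fun y => a y • grad b y - b y • grad a y) x = a x * lapS b x - b x * lapS a x := by
  have ha1 := ha.differentiableAt (by norm_num)
  have hb1 := hb.differentiableAt (by norm_num)
  simp only [dvg, lapS, grad, Pi.sub_apply, Pi.smul_apply, smul_eq_mul]
  rw [pd_sub (ha1.fun_mul (hb.differentiableAt_pd 0)) (hb1.fun_mul (ha.differentiableAt_pd 0)),
    pd_sub (ha1.fun_mul (hb.differentiableAt_pd 1)) (hb1.fun_mul (ha.differentiableAt_pd 1)),
    pd_sub (ha1.fun_mul (hb.differentiableAt_pd 2)) (hb1.fun_mul (ha.differentiableAt_pd 2)),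
    pd_mul ha1 (hb.differentiableAt_pd 0), pd_mul hb1 (ha.differentiableAt_pd 0),
    pd_mul ha1 (hb.differentiableAt_pd 1), pd_mul hb1 (ha.differentiableAt_pd 1),
    pd_mul ha1 (hb.differentiableAt_pd 2), pd_mul hb1 (ha.differentiableAt_pd 2)]
  ring

theorem dvg_sq_smul_grad_div {a b : V3 → 𝕜} {x : V3} (ha : ContDiffAt ℝ 2 a x)
    (hb : ContDiffAt ℝ 2 b x) (h0 : b x ≠ 0) :
    dvg (fun y => b y ^ 2 • grad (fun z => a z / b z) y) x = b x * lapS a x - a x * lapS b x := by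
  have hquot : (fun y => b y ^ 2 • grad (fun z => a z / b z) y)
      =ᶠ[𝓝 x] fun y => b y • grad a y - a y • grad b y := by
    filter_upwards [ha.eventually (by simp), hb.eventually (by simp),
      hb.continuousAt.eventually_ne h0] with y hay hby hy0
    exact sq_smul_grad_div (hay.differentiableAt two_ne_zero) (hby.differentiableAt two_ne_zero)
      hy0
  rw [hquot.dvg_eq, dvg_smul_grad_sub_smul_grad hb ha]

theorem rot_mul {a : V3 → 𝕜} {v : V3 → Fin 3 → 𝕜} {x : V3} (ha : DifferentiableAt ℝ a x)
    (hv : ∀ i, DifferentiableAt ℝ (fun y => v y i) x) :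
    rot (fun y i => a y * v y i) x = a x • rot v x + grad a x ⨯₃ v x := by
  funext i
  fin_cases i <;>
    simp only [rot, grad, cross_apply, pd_mul ha (hv _), Pi.add_apply, smul_cons, smul_eq_mul,
      smul_empty, Nat.succ_eq_add_one, Nat.reduceAdd, Fin.isValue, Fin.zero_eta, Fin.mk_one,
      Fin.reduceFinMk, cons_val_zero, cons_val_one, cons_val] <;>
    ring

end Scalar

theorem QContDiffOn.vecPart {n : ℕ∞} {W : V3 → HC} {s : Set V3} (hW : QContDiffOn n W s)
    (i : Fin 3) : ContDiffOn ℝ n (fun x => vecPart (W x) i) s := by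
  obtain ⟨-, hI, hJ, hK⟩ := hW
  fin_cases i <;> simpa [vecPart]

theorem vecPart_Dq (W : V3 → HC) (x : V3) :
    vecPart (Dq W x) = grad (fun y => (W y).re) x + rot (fun y => vecPart (W y)) x := by
  funext i
  fin_cases i <;>
    simp only [vecPart, Dq, Quaternion.imI_add, Quaternion.imI_mul, Quaternion.imJ_add,
      Quaternion.imJ_mul, Quaternion.imK_add, Quaternion.imK_mul, Pi.add_apply, Fin.isValue,
      Fin.zero_eta, Fin.mk_one, Fin.reduceFinMk, cons_val_zero, cons_val_one, cons_val] <;>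
    simp only [e1, e2, e3, qpd, grad, rot, Fin.isValue, cons_val_zero, cons_val_one, cons_val,
      zero_mul, one_mul] <;>
    ring

theorem vecPart_vecq_mul_qconj (g : Fin 3 → ℂ) (w : HC) :
    vecPart (vecq g * qconj w) = w.re • g - g ⨯₃ vecPart w := by
  funext i
  fin_cases i <;>
    simp only [vecPart, Quaternion.imI_mul, Quaternion.imJ_mul, Quaternion.imK_mul, Pi.sub_apply,
      Pi.smul_apply, smul_eq_mul, Fin.isValue, Fin.zero_eta, Fin.mk_one, Fin.reduceFinMk,
      cons_val_zero, cons_val_one, cons_val] <;>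
    simp only [vecq, qconj, cross_apply, Nat.succ_eq_add_one, Nat.reduceAdd, Fin.isValue,
      cons_val_zero, cons_val_one, cons_val] <;>
    ring

theorem sq_smul_grad_div_eq_neg_rot_of_vekua {f : V3 → ℂ} {W : V3 → HC} {x : V3}
    (hf : DifferentiableAt ℝ f x) (hW₀ : DifferentiableAt ℝ (fun y => (W y).re) x)
    (hW : ∀ i, DifferentiableAt ℝ (fun y => vecPart (W y) i) x) (hf0 : f x ≠ 0)
    (hWe : Dq W x = vecq (fun k => grad f x k / f x) * qconj (W x)) :
    f x ^ 2 • grad (fun y => (W y).re / f y) x = -rot (fun y i => f y * vecPart (W y) i) x := by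
  have hg : (fun k => grad f x k / f x) = (f x)⁻¹ • grad f x := by
    funext k
    simp [div_eq_inv_mul]
  have h := congrArg (f x • ·) (congrArg vecPart hWe)
  simp only [vecPart_Dq, vecPart_vecq_mul_qconj, hg, map_smul, LinearMap.smul_apply,
    smul_sub, smul_add, smul_smul, mul_left_comm (f x),
    mul_inv_cancel₀ hf0, mul_one] at h
  rw [sq_smul_grad_div hW₀ hf hf0, rot_mul hf hW]
  linear_combination (norm := module) h

/-- consequences of the main quaternionic Vekua equation
DW = (Df/f)·W̄ for W = W₀ + W⃗. -/
theorem stmt15 (Ω : Set V3) (hΩ : IsOpen Ω) (f : V3 → ℂ)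
    (hf : ContDiffOn ℝ 3 f Ω) (hf0 : ∀ x ∈ Ω, f x ≠ 0)
    (W : V3 → HC) (hW : QContDiffOn 2 W Ω)
    (hWe : ∀ x ∈ Ω, Dq W x = vecq (fun k => grad f x k / f x) * qconj (W x)) :
    (∀ x ∈ Ω, -lapS (fun y => (W y).re) x + (lapS f x / f x) * (W x).re = 0) ∧
    (∀ x ∈ Ω, dvg (fun y k => f y ^ 2 * pd k (fun z => (W z).re / f z) y) x = 0) ∧
    (∀ x ∈ Ω, rot (fun y => (f y ^ 2)⁻¹ •
        rot (fun z k => f z * vecPart (W z) k) y) x = 0) := by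
  have hf2 : ∀ x ∈ Ω, ContDiffAt ℝ 2 f x :=
    fun x hx => (hf.of_le (by norm_num)).contDiffAt (hΩ.mem_nhds hx)
  have hW₀ : ∀ x ∈ Ω, ContDiffAt ℝ 2 (fun y => (W y).re) x :=
    fun x hx => hW.1.contDiffAt (hΩ.mem_nhds hx)
  have hWv : ∀ x ∈ Ω, ∀ i, ContDiffAt ℝ 2 (fun y => vecPart (W y) i) x :=
    fun x hx i => (hW.vecPart i).contDiffAt (hΩ.mem_nhds hx)
  have hkey : ∀ x ∈ Ω, f x ^ 2 • grad (fun y => (W y).re / f y) x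
      = -rot (fun y k => f y * vecPart (W y) k) x := fun x hx =>
    sq_smul_grad_div_eq_neg_rot_of_vekua ((hf2 x hx).differentiableAt two_ne_zero)
      ((hW₀ x hx).differentiableAt two_ne_zero)
      (fun i => (hWv x hx i).differentiableAt two_ne_zero) (hf0 x hx) (hWe x hx)
  have hdvg : ∀ x ∈ Ω, dvg (fun y => f y ^ 2 • grad (fun z => (W z).re / f z) y) x = 0 := by
    intro x hx
    rw [(eventuallyEq_of_mem (hΩ.mem_nhds hx) hkey).dvg_eq, dvg_neg,
      dvg_rot_eq_zero fun i => (hf2 x hx).mul (hWv x hx i), neg_zero]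
  refine ⟨fun x hx => ?_, hdvg, fun x hx => ?_⟩
  · have h := hdvg x hx
    rw [dvg_sq_smul_grad_div (hW₀ x hx) (hf2 x hx) (hf0 x hx)] at h
    field_simp [hf0 x hx]
    linear_combination -h
  · have hrot : (fun y => (f y ^ 2)⁻¹ • rot (fun z k => f z * vecPart (W z) k) y)
        =ᶠ[𝓝 x] grad (fun y => -((W y).re / f y)) := by
      refine eventuallyEq_of_mem (hΩ.mem_nhds hx) fun y hy => ?_
      rw [grad_neg, ← neg_eq_iff_eq_neg.mpr (hkey y hy), smul_neg, smul_smul,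
        inv_mul_cancel₀ (pow_ne_zero 2 (hf0 y hy)), one_smul]
    have hu : ContDiffAt ℝ 2 (fun y => (W y).re / f y) x := by
      simpa only [div_eq_mul_inv] using (hW₀ x hx).mul ((hf2 x hx).fun_inv (hf0 x hx))
    rw [hrot.rot_eq, rot_grad_eq_zero hu.neg]
end
end
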